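/- Let d ∈ {2, 3} and let Ω ⊆ ℝᵈ be a bounded measurable set equipped with Lebesgue measure. Let (vᵢ), v : Ω → ℝ with ‖vᵢ − v‖_{L⁶(Ω)} → 0, let (wᵢ), w : Ω → ℝᵈ with ‖wᵢ − w‖_{L⁶(Ω;ℝᵈ)} → 0, and let (Aᵢ), A : Ω → (ℝᵈ →L[ℝ] ℝᵈ) be matrix fields with each Aᵢ and A in L²(Ω), with supᵢ ‖Aᵢ‖_{L²} < ∞, such that Aᵢ converges to A weakly in L², i.e. ∫_Ω ⟪Aᵢ(x), B(x)⟫ dx → ∫_Ω ⟪A(x), B(x)⟫ dx for every matrix field B ∈ L²(Ω) (with ⟪·,·⟫ the Frobenius inner product). Then the products vᵢ Aᵢ wᵢ converge to v A w weakly in L^{6/5}, i.e. for every g : Ω → ℝᵈ with g ∈ L⁶(Ω;ℝᵈ), one has ∫_Ω vᵢ(x) ⟨Aᵢ(x) (wᵢ(x)), g(x)⟩ dx → ∫_Ω v(x) ⟨A(x) (w(x)), g(x)⟩ dx. -/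

import Mathlib

/-!
Split `vᵢ ⟪Aᵢ wᵢ, g⟫ - v ⟪Aᵢ w, g⟫ = (vᵢ - v) ⟪Aᵢ wᵢ, g⟫ + v ⟪Aᵢ (wᵢ - w), g⟫`. Hölder's inequality
with `1/6 + 1/2 + 1/6 + 1/6 = 1` bounds both integrals by an `L⁶` error times the uniform `L²`
bound on `Aᵢ`, so they tend to zero. What remains, `∫ v ⟪Aᵢ w, g⟫`, is the Frobenius pairing of
`Aᵢ` with the rank-one field `v • (g ⊗ w)`, which lies in `L²` because `1/6 + 1/6 + 1/6 = 1/2`;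
weak convergence of `Aᵢ` identifies its limit.
-/

open MeasureTheory Filter

/-- The Frobenius inner product of two linear maps on `ℝᵈ`,
`⟪A, B⟫ = ∑ⱼ ⟨A eⱼ, B eⱼ⟩ = tr(Aᵀ B)`. -/
noncomputable def frobeniusInner {d : ℕ}
    (A B : EuclideanSpace ℝ (Fin d) →L[ℝ] EuclideanSpace ℝ (Fin d)) : ℝ :=
  ∑ j : Fin d, (inner ℝ (A (EuclideanSpace.single j 1)) (B (EuclideanSpace.single j 1)) : ℝ)

open Topology
open scoped ENNReal InnerProductSpace

theorem eLpNorm_le_eLpNorm_mul_eLpNorm_of_norm_le {α E F G : Type*} [MeasurableSpace α]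
    {μ : Measure α} [NormedAddCommGroup E] [NormedAddCommGroup F] [NormedAddCommGroup G]
    {p q r : ℝ≥0∞} [p.HolderTriple q r] {f : α → E} {g : α → F}
    (hf : AEStronglyMeasurable f μ) (hg : AEStronglyMeasurable g μ)
    (b : E → F → G) (hb : ∀ x y, ‖b x y‖ ≤ ‖x‖ * ‖y‖) :
    eLpNorm (fun x => b (f x) (g x)) r μ ≤ eLpNorm f p μ * eLpNorm g q μ := by
  simpa using eLpNorm_le_eLpNorm_mul_eLpNorm'_of_norm hf hg b 1
    (.of_forall fun x => by simpa using hb (f x) (g x))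

theorem norm_integral_le_toReal_eLpNorm_one {α G : Type*} [MeasurableSpace α] {μ : Measure α}
    [NormedAddCommGroup G] [NormedSpace ℝ G] {f : α → G} (hf : AEStronglyMeasurable f μ) :
    ‖∫ x, f x ∂μ‖ ≤ (eLpNorm f 1 μ).toReal := by
  rw [eLpNorm_one_eq_lintegral_enorm, ← integral_norm_eq_lintegral_enorm hf]
  exact norm_integral_le_integral_norm f

section MulInnerApply

variable {α E F : Type*} [MeasurableSpace α] {μ : Measure α}
  [NormedAddCommGroup E] [NormedSpace ℝ E] [NormedAddCommGroup F] [InnerProductSpace ℝ F]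
  {a b c e : ℝ≥0∞} {v : α → ℝ} {A : α → E →L[ℝ] F} {w : α → E} {g : α → F}

theorem MeasureTheory.AEStronglyMeasurable.clm_apply (hA : AEStronglyMeasurable A μ)
    (hw : AEStronglyMeasurable w μ) : AEStronglyMeasurable (fun x => A x (w x)) μ :=
  (ContinuousLinearMap.apply ℝ F).flip.aestronglyMeasurable_comp₂ hA hw

theorem eLpNorm_mul_inner_apply_le (habce : a⁻¹ + b⁻¹ + c⁻¹ + e⁻¹ = 1)
    (hv : AEStronglyMeasurable v μ) (hA : AEStronglyMeasurable A μ)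
    (hw : AEStronglyMeasurable w μ) (hg : AEStronglyMeasurable g μ) :
    eLpNorm (fun x => v x * ⟪A x (w x), g x⟫_ℝ) 1 μ ≤
      eLpNorm v a μ * eLpNorm A b μ * eLpNorm w c μ * eLpNorm g e μ := by
  have : b.HolderTriple c (b⁻¹ + c⁻¹)⁻¹ := .of b c
  have : (b⁻¹ + c⁻¹)⁻¹.HolderTriple e (b⁻¹ + c⁻¹ + e⁻¹)⁻¹ := by
    simpa using ENNReal.HolderTriple.of (b⁻¹ + c⁻¹)⁻¹ e
  have : a.HolderTriple (b⁻¹ + c⁻¹ + e⁻¹)⁻¹ 1 := ⟨by rw [inv_inv, inv_one, ← habce]; ring⟩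
  have hAw := hA.clm_apply hw
  calc eLpNorm (fun x => v x * ⟪A x (w x), g x⟫_ℝ) 1 μ
      ≤ eLpNorm v a μ * eLpNorm (fun x => ⟪A x (w x), g x⟫_ℝ) (b⁻¹ + c⁻¹ + e⁻¹)⁻¹ μ :=
        eLpNorm_le_eLpNorm_mul_eLpNorm_of_norm_le hv (hAw.inner hg) (· * ·)
          fun s t => (norm_mul s t).le
    _ ≤ eLpNorm v a μ * (eLpNorm (fun x => A x (w x)) (b⁻¹ + c⁻¹)⁻¹ μ * eLpNorm g e μ) := by
        gcongr
        exact eLpNorm_le_eLpNorm_mul_eLpNorm_of_norm_le hAw hg _ norm_inner_le_norm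
    _ ≤ eLpNorm v a μ * (eLpNorm A b μ * eLpNorm w c μ * eLpNorm g e μ) := by
        gcongr
        exact eLpNorm_le_eLpNorm_mul_eLpNorm_of_norm_le hA hw _ ContinuousLinearMap.le_opNorm
    _ = eLpNorm v a μ * eLpNorm A b μ * eLpNorm w c μ * eLpNorm g e μ := by ring

theorem integrable_mul_inner_apply (habce : a⁻¹ + b⁻¹ + c⁻¹ + e⁻¹ = 1)
    (hv : MemLp v a μ) (hA : MemLp A b μ) (hw : MemLp w c μ) (hg : MemLp g e μ) :
    Integrable (fun x => v x * ⟪A x (w x), g x⟫_ℝ) μ :=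
  memLp_one_iff_integrable.1 ⟨hv.1.mul ((hA.1.clm_apply hw.1).inner hg.1),
    (eLpNorm_mul_inner_apply_le habce hv.1 hA.1 hw.1 hg.1).trans_lt <| by
      finiteness [hv.2, hA.2, hw.2, hg.2]⟩

theorem abs_integral_mul_inner_apply_le (habce : a⁻¹ + b⁻¹ + c⁻¹ + e⁻¹ = 1)
    (hv : MemLp v a μ) (hA : MemLp A b μ) (hw : MemLp w c μ) (hg : MemLp g e μ) :
    |∫ x, v x * ⟪A x (w x), g x⟫_ℝ ∂μ| ≤ (eLpNorm v a μ).toReal * (eLpNorm A b μ).toReal *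
      (eLpNorm w c μ).toReal * (eLpNorm g e μ).toReal := by
  simp only [← ENNReal.toReal_mul, ← Real.norm_eq_abs]
  exact (norm_integral_le_toReal_eLpNorm_one
    (integrable_mul_inner_apply habce hv hA hw hg).1).trans <|
    ENNReal.toReal_mono (by finiteness [hv.2, hA.2, hw.2, hg.2])
      (eLpNorm_mul_inner_apply_le habce hv.1 hA.1 hw.1 hg.1)

theorem abs_integral_mul_inner_apply_sub_le (habce : a⁻¹ + b⁻¹ + c⁻¹ + e⁻¹ = 1)
    {v' : α → ℝ} {w' : α → E} (hv' : MemLp v' a μ) (hv : MemLp v a μ) (hA : MemLp A b μ)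
    (hw' : MemLp w' c μ) (hw : MemLp w c μ) (hg : MemLp g e μ) :
    |∫ x, v' x * ⟪A x (w' x), g x⟫_ℝ ∂μ - ∫ x, v x * ⟪A x (w x), g x⟫_ℝ ∂μ| ≤
      (eLpNorm (v' - v) a μ).toReal * (eLpNorm A b μ).toReal *
          ((eLpNorm (w' - w) c μ).toReal + (eLpNorm w c μ).toReal) * (eLpNorm g e μ).toReal +
        (eLpNorm v a μ).toReal * (eLpNorm A b μ).toReal * (eLpNorm (w' - w) c μ).toReal *
          (eLpNorm g e μ).toReal := by
  have hc : 1 ≤ c := ENNReal.inv_le_one.1 <|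
    (le_add_right (le_add_left le_rfl)).trans_eq habce
  have hw'_le : (eLpNorm w' c μ).toReal ≤
      (eLpNorm (w' - w) c μ).toReal + (eLpNorm w c μ).toReal := by
    rw [← ENNReal.toReal_add (hw'.sub hw).2.ne hw.2.ne]
    refine ENNReal.toReal_mono (by finiteness [(hw'.sub hw).2, hw.2]) ?_
    simpa using eLpNorm_add_le (hw'.sub hw).1 hw.1 hc
  have hsplit : ∫ x, v' x * ⟪A x (w' x), g x⟫_ℝ ∂μ - ∫ x, v x * ⟪A x (w x), g x⟫_ℝ ∂μ =
      ∫ x, (v' - v) x * ⟪A x (w' x), g x⟫_ℝ ∂μ + ∫ x, v x * ⟪A x ((w' - w) x), g x⟫_ℝ ∂μ := by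
    rw [← integral_sub (integrable_mul_inner_apply habce hv' hA hw' hg)
        (integrable_mul_inner_apply habce hv hA hw hg),
      ← integral_add (integrable_mul_inner_apply habce (hv'.sub hv) hA hw' hg)
        (integrable_mul_inner_apply habce hv hA (hw'.sub hw) hg)]
    congr 1 with x
    simp only [Pi.sub_apply, map_sub, inner_sub_left]
    ring
  rw [hsplit]
  refine (abs_add_le _ _).trans (add_le_add ?_
    (abs_integral_mul_inner_apply_le habce hv hA (hw'.sub hw) hg))
  refine (abs_integral_mul_inner_apply_le habce (hv'.sub hv) hA hw' hg).trans ?_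
  gcongr

theorem tendsto_integral_mul_inner_apply_sub {ι : Type*} {l : Filter ι}
    (habce : a⁻¹ + b⁻¹ + c⁻¹ + e⁻¹ = 1)
    {vi : ι → α → ℝ} {Ai : ι → α → E →L[ℝ] F} {wi : ι → α → E}
    (hvi : ∀ i, MemLp (vi i) a μ) (hv : MemLp v a μ)
    (hvconv : Tendsto (fun i => eLpNorm (vi i - v) a μ) l (𝓝 0))
    (hwi : ∀ i, MemLp (wi i) c μ) (hw : MemLp w c μ)
    (hwconv : Tendsto (fun i => eLpNorm (wi i - w) c μ) l (𝓝 0))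
    (hAi : ∀ i, MemLp (Ai i) b μ) (hAbdd : ⨆ i, eLpNorm (Ai i) b μ < ⊤) (hg : MemLp g e μ) :
    Tendsto (fun i => ∫ x, vi i x * ⟪Ai i x (wi i x), g x⟫_ℝ ∂μ -
      ∫ x, v x * ⟪Ai i x (w x), g x⟫_ℝ ∂μ) l (𝓝 0) := by
  set ε := fun i => (eLpNorm (vi i - v) a μ).toReal
  set δ := fun i => (eLpNorm (wi i - w) c μ).toReal
  set S := (⨆ i, eLpNorm (Ai i) b μ).toReal
  set V := (eLpNorm v a μ).toReal
  set W := (eLpNorm w c μ).toReal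
  set G := (eLpNorm g e μ).toReal
  have hbound (i : ι) : ‖∫ x, vi i x * ⟪Ai i x (wi i x), g x⟫_ℝ ∂μ -
      ∫ x, v x * ⟪Ai i x (w x), g x⟫_ℝ ∂μ‖ ≤ ε i * S * (δ i + W) * G + V * S * δ i * G := by
    have hAi_le : (eLpNorm (Ai i) b μ).toReal ≤ S :=
      ENNReal.toReal_mono hAbdd.ne (le_iSup (fun i => eLpNorm (Ai i) b μ) i)
    rw [Real.norm_eq_abs]
    refine (abs_integral_mul_inner_apply_sub_le habce (hvi i) hv (hAi i) (hwi i) hw hg).trans ?_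
    gcongr
  have hε : Tendsto ε l (𝓝 0) := by
    simpa [ε, Function.comp_def] using (ENNReal.tendsto_toReal ENNReal.zero_ne_top).comp hvconv
  have hδ : Tendsto δ l (𝓝 0) := by
    simpa [δ, Function.comp_def] using (ENNReal.tendsto_toReal ENNReal.zero_ne_top).comp hwconv
  refine squeeze_zero_norm hbound ?_
  simpa using (((hε.mul_const S).mul (hδ.add_const W)).mul_const G).add
    ((hδ.const_mul (V * S)).mul_const G)

end MulInnerApply

theorem frobeniusInner_smul_rankOne {d : ℕ}
    (M : EuclideanSpace ℝ (Fin d) →L[ℝ] EuclideanSpace ℝ (Fin d)) (t : ℝ)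
    (y z : EuclideanSpace ℝ (Fin d)) :
    frobeniusInner M (t • InnerProductSpace.rankOne ℝ z y) = t * ⟪M y, z⟫_ℝ := by
  have hy : ∑ j, ⟪EuclideanSpace.single j (1 : ℝ), y⟫_ℝ • EuclideanSpace.single j (1 : ℝ) = y := by
    simpa using (EuclideanSpace.basisFun (Fin d) ℝ).sum_repr' y
  conv_rhs => rw [← hy]
  simp only [frobeniusInner, map_sum, map_smul, sum_inner, Finset.mul_sum,
    FunLike.coe_smul, Pi.smul_apply, InnerProductSpace.rankOne_apply, real_inner_smul_left,
    real_inner_smul_right, real_inner_comm y]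

theorem MeasureTheory.MemLp.smul_rankOne {α E F : Type*} [MeasurableSpace α] {μ : Measure α}
    [NormedAddCommGroup E] [InnerProductSpace ℝ E] [NormedAddCommGroup F] [NormedSpace ℝ F]
    {a c e r : ℝ≥0∞} {v : α → ℝ} {w : α → E} {g : α → F} (hace : a⁻¹ + c⁻¹ + e⁻¹ = r⁻¹)
    (hv : MemLp v a μ) (hw : MemLp w c μ) (hg : MemLp g e μ) :
    MemLp (fun x => v x • InnerProductSpace.rankOne ℝ (g x) (w x)) r μ := by
  have : e.HolderTriple c (e⁻¹ + c⁻¹)⁻¹ := .of e c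
  have : a.HolderTriple (e⁻¹ + c⁻¹)⁻¹ r := ⟨by rw [inv_inv, ← hace]; ring⟩
  have hgw : MemLp (fun x => InnerProductSpace.rankOne ℝ (g x) (w x)) (e⁻¹ + c⁻¹)⁻¹ μ :=
    hg.of_bilin (fun y z => InnerProductSpace.rankOne ℝ y z) 1 hw
      ((ContinuousLinearMap.smulRightL ℝ E F).aestronglyMeasurable_comp₂
        ((innerSL ℝ).continuous.comp_aestronglyMeasurable hw.1) hg.1)
      (.of_forall fun x => by simp)
  exact hgw.smul hv

theorem weak_limit_of_products_general
    (d : ℕ)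
    (Ω : Set (EuclideanSpace ℝ (Fin d)))
    (vi : ℕ → EuclideanSpace ℝ (Fin d) → ℝ) (v : EuclideanSpace ℝ (Fin d) → ℝ)
    (hvi : ∀ i, MemLp (vi i) 6 (volume.restrict Ω))
    (hv : MemLp v 6 (volume.restrict Ω))
    (hvconv : Tendsto (fun i => eLpNorm (fun x => vi i x - v x) 6 (volume.restrict Ω))
      atTop (nhds 0))
    (wi : ℕ → EuclideanSpace ℝ (Fin d) → EuclideanSpace ℝ (Fin d))
    (w : EuclideanSpace ℝ (Fin d) → EuclideanSpace ℝ (Fin d))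
    (hwi : ∀ i, MemLp (wi i) 6 (volume.restrict Ω))
    (hw : MemLp w 6 (volume.restrict Ω))
    (hwconv : Tendsto (fun i => eLpNorm (fun x => wi i x - w x) 6 (volume.restrict Ω))
      atTop (nhds 0))
    (Ai : ℕ → EuclideanSpace ℝ (Fin d) → (EuclideanSpace ℝ (Fin d) →L[ℝ] EuclideanSpace ℝ (Fin d)))
    (A : EuclideanSpace ℝ (Fin d) → (EuclideanSpace ℝ (Fin d) →L[ℝ] EuclideanSpace ℝ (Fin d)))
    (hAi : ∀ i, MemLp (Ai i) 2 (volume.restrict Ω))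
    (hAbdd : (⨆ i, eLpNorm (Ai i) 2 (volume.restrict Ω)) < ⊤)
    (hAconv : ∀ B : EuclideanSpace ℝ (Fin d) →
        (EuclideanSpace ℝ (Fin d) →L[ℝ] EuclideanSpace ℝ (Fin d)),
      MemLp B 2 (volume.restrict Ω) →
      Tendsto (fun i => ∫ x, frobeniusInner (Ai i x) (B x) ∂(volume.restrict Ω))
        atTop (nhds (∫ x, frobeniusInner (A x) (B x) ∂(volume.restrict Ω)))) :
    ∀ g : EuclideanSpace ℝ (Fin d) → EuclideanSpace ℝ (Fin d),
      MemLp g 6 (volume.restrict Ω) →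
      Tendsto (fun i => ∫ x, vi i x * (inner ℝ (Ai i x (wi i x)) (g x) : ℝ) ∂(volume.restrict Ω))
        atTop (nhds (∫ x, v x * (inner ℝ (A x (w x)) (g x) : ℝ) ∂(volume.restrict Ω))) := by
  intro g hg
  have hexp₃ : (6 : ℝ≥0∞)⁻¹ + 6⁻¹ + 6⁻¹ = 2⁻¹ := by
    rw [← ENNReal.toReal_eq_toReal_iff' (by simp) (by simp)]
    norm_num [ENNReal.toReal_add]
  have hexp₄ : (6 : ℝ≥0∞)⁻¹ + 2⁻¹ + 6⁻¹ + 6⁻¹ = 1 := by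
    calc (6 : ℝ≥0∞)⁻¹ + 2⁻¹ + 6⁻¹ + 6⁻¹ = 2⁻¹ + 2⁻¹ := by rw [← hexp₃]; ring
      _ = 1 := ENNReal.inv_two_add_inv_two
  have hweak := hAconv _ (hv.smul_rankOne hexp₃ hw hg)
  simp only [frobeniusInner_smul_rankOne] at hweak
  simpa using (tendsto_integral_mul_inner_apply_sub hexp₄ hvi hv hvconv hwi hw hwconv hAi hAbdd
    hg).add hweak

/-- If `vᵢ → v` strongly in `L⁶`, `wᵢ → w` strongly in `L⁶`, and the matrix fields
`Aᵢ → A` weakly in `L²` with `supᵢ ‖Aᵢ‖_{L²} < ∞`, then `vᵢ Aᵢ wᵢ → v A w`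
weakly in `L^{6/5}` on the bounded set `Ω ⊆ ℝᵈ`, `d ∈ {2,3}`. -/
theorem weak_limit_of_products
    (d : ℕ) (hd : d = 2 ∨ d = 3)
    (Ω : Set (EuclideanSpace ℝ (Fin d)))
    (hΩb : Bornology.IsBounded Ω) (hΩm : MeasurableSet Ω)
    (vi : ℕ → EuclideanSpace ℝ (Fin d) → ℝ) (v : EuclideanSpace ℝ (Fin d) → ℝ)
    (hvi : ∀ i, MemLp (vi i) 6 (volume.restrict Ω))
    (hv : MemLp v 6 (volume.restrict Ω))
    (hvconv : Tendsto (fun i => eLpNorm (fun x => vi i x - v x) 6 (volume.restrict Ω))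
      atTop (nhds 0))
    (wi : ℕ → EuclideanSpace ℝ (Fin d) → EuclideanSpace ℝ (Fin d))
    (w : EuclideanSpace ℝ (Fin d) → EuclideanSpace ℝ (Fin d))
    (hwi : ∀ i, MemLp (wi i) 6 (volume.restrict Ω))
    (hw : MemLp w 6 (volume.restrict Ω))
    (hwconv : Tendsto (fun i => eLpNorm (fun x => wi i x - w x) 6 (volume.restrict Ω))
      atTop (nhds 0))
    (Ai : ℕ → EuclideanSpace ℝ (Fin d) → (EuclideanSpace ℝ (Fin d) →L[ℝ] EuclideanSpace ℝ (Fin d)))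
    (A : EuclideanSpace ℝ (Fin d) → (EuclideanSpace ℝ (Fin d) →L[ℝ] EuclideanSpace ℝ (Fin d)))
    (hAi : ∀ i, MemLp (Ai i) 2 (volume.restrict Ω))
    (hA : MemLp A 2 (volume.restrict Ω))
    (hAbdd : (⨆ i, eLpNorm (Ai i) 2 (volume.restrict Ω)) < ⊤)
    (hAconv : ∀ B : EuclideanSpace ℝ (Fin d) →
        (EuclideanSpace ℝ (Fin d) →L[ℝ] EuclideanSpace ℝ (Fin d)),
      MemLp B 2 (volume.restrict Ω) →
      Tendsto (fun i => ∫ x, frobeniusInner (Ai i x) (B x) ∂(volume.restrict Ω))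
        atTop (nhds (∫ x, frobeniusInner (A x) (B x) ∂(volume.restrict Ω)))) :
    ∀ g : EuclideanSpace ℝ (Fin d) → EuclideanSpace ℝ (Fin d),
      MemLp g 6 (volume.restrict Ω) →
      Tendsto (fun i => ∫ x, vi i x * (inner ℝ (Ai i x (wi i x)) (g x) : ℝ) ∂(volume.restrict Ω))
        atTop (nhds (∫ x, v x * (inner ℝ (A x (w x)) (g x) : ℝ) ∂(volume.restrict Ω))) :=
  weak_limit_of_products_general d Ω vi v hvi hv hvconv wi w hwi hw hwconv Ai A hAi hAbdd hAconv
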